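/- arXiv:2203.09852 — 7 statements merged into one kernel-verified Lean document; each statement's English description precedes it below -/
import Mathlib

section
/- Using the therapeutic threshold under α-miscalibration can incur regret of order α·m: for every integer m ≥ 2 and every α ∈ (0,1], with j* = m−1, there exists a configuration (μ, ỹ) with ECE at most α such that regret(μ,ỹ, m−1) ≥ α·m − 1. (Concretely, μ_m = 1 and μ_i = 0 for i < m, with ỹ_m = 1−α, is such a configuration.) -/
/-! A patient whose predicted risk sits in the top level `m` is always treated at the
therapeutic threshold `m - 1`. Put all mass there with true outcome rate `1 - α`: the
calibration error is exactly `α`, yet treating yields net benefit `1 - α m`, while treating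
nobody yields `0`. -/

open Finset

theorem Finset.sum_pi_single_one_mul {ι R : Type*} [DecidableEq ι] [NonAssocSemiring R]
    {s : Finset ι} {a : ι} (ha : a ∈ s) (g : ι → R) :
    ∑ i ∈ s, (Pi.single a 1 : ι → R) i * g i = g a := by
  simp [Pi.single_apply, ha]

theorem zero_le_sup'_sum_Icc_succ {M : Type*} [AddCommMonoid M] [SemilatticeSup M]
    (m : ℕ) (h : (Icc 0 m).Nonempty) (f : ℕ → M) :
    0 ≤ (Icc 0 m).sup' h (fun j => ∑ i ∈ Icc (j + 1) m, f i) := by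
  have := le_sup' (fun j => ∑ i ∈ Icc (j + 1) m, f i) (right_mem_Icc.2 m.zero_le)
  rwa [Icc_eq_empty_of_lt m.lt_succ_self, sum_empty] at this

/-- **Regret of order `α·m` when using the therapeutic threshold under `α`-miscalibration.**
For every `m ≥ 2` and `α ∈ (0,1]`, with therapeutic threshold `j* = m−1`, there is a
discretized configuration `(μ, ỹ)` (masses `μ_1,…,μ_m ≥ 0` summing to 1, conditional
means `ỹ_i ∈ [0,1]`) with ECE at most `α` whose regret at threshold `m−1` is at least
`α·m − 1`, where `Λ(μ,ỹ,j) = ∑_{i=j+1}^m μ_i·(m·ỹ_i − j*)/min(m−j*, j*)` and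
`regret(μ,ỹ,j) = max_{j'∈{0,…,m}} Λ(μ,ỹ,j') − Λ(μ,ỹ,j)`. -/
theorem regret_lower_bound_at_therapeutic_threshold
    (m : ℕ) (hm : 2 ≤ m)
    (α : ℝ) (hα : α ∈ Set.Ioc (0 : ℝ) 1) :
    ∃ μ ytil : ℕ → ℝ,
      (∀ i ∈ Finset.Icc 1 m, 0 ≤ μ i) ∧
      (∑ i ∈ Finset.Icc 1 m, μ i = 1) ∧
      (∀ i ∈ Finset.Icc 1 m, ytil i ∈ Set.Icc (0 : ℝ) 1) ∧
      (∑ i ∈ Finset.Icc 1 m, μ i * |ytil i - (i : ℝ) / m| ≤ α) ∧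
      ((Finset.Icc 0 m).sup' ⟨0, Finset.mem_Icc.mpr ⟨le_rfl, Nat.zero_le m⟩⟩
          (fun j' => ∑ i ∈ Finset.Icc (j' + 1) m,
            μ i * ((m : ℝ) * ytil i - ((m : ℝ) - 1)) / min ((m : ℝ) - ((m : ℝ) - 1)) ((m : ℝ) - 1))
        - ∑ i ∈ Finset.Icc ((m - 1) + 1) m,
            μ i * ((m : ℝ) * ytil i - ((m : ℝ) - 1)) / min ((m : ℝ) - ((m : ℝ) - 1)) ((m : ℝ) - 1))
        ≥ α * m - 1 := by
  obtain ⟨hα0, hα1⟩ := hα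
  have hm_mem : m ∈ Icc 1 m := right_mem_Icc.2 (by omega)
  have hm_two : (2 : ℝ) ≤ m := by exact_mod_cast hm
  have hm_ne : (m : ℝ) ≠ 0 := by positivity
  have hmin : min ((m : ℝ) - ((m : ℝ) - 1)) ((m : ℝ) - 1) = 1 := by
    rw [sub_sub_cancel, min_eq_left (by linarith)]
  refine ⟨Pi.single m 1, Pi.single m (1 - α), fun i _ => by rw [Pi.single_apply]; positivity,
    by simp [hm_mem], fun i _ => ?_, ?_, ?_⟩
  · rcases eq_or_ne i m with rfl | hi
    · simp only [Pi.single_eq_same, Set.mem_Icc]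
      constructor <;> linarith
    · simp [hi]
  · rw [sum_pi_single_one_mul hm_mem, Pi.single_eq_same, div_self hm_ne,
      abs_of_nonpos (by linarith)]
    linarith
  · refine le_trans ?_ (sub_le_sub_right (zero_le_sup'_sum_Icc_succ m _ _) _)
    rw [Nat.sub_add_cancel (by omega), Icc_self, sum_singleton, hmin]
    simp only [Pi.single_eq_same]
    linarith
end

section
/- (Reduction to constant predictors under MCE.) For every threshold j ∈ [0,m], the worst-case MCE cost is attained over constant predictors: c_MCE(j) equals the supremum of regret(j) taken only over configurations supported on a single value (n = 1, i.e., a single mass point μ_1 = 1 with one predicted value v_1 ∈ [0,1] and one conditional mean y_1 ∈ [0,1] satisfying |y_1 − v_1| ≤ α). -/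
/-- A configuration: a finite family of mass points `k ∈ {1,…,n}` with masses `μ_k ≥ 0`
summing to `1`, predicted values `v_k ∈ [0,1]` and conditional outcome means `y_k ∈ [0,1]`. -/
structure Config where
  n : ℕ
  μ : Fin n → ℝ
  v : Fin n → ℝ
  y : Fin n → ℝ
  μ_nonneg : ∀ k, 0 ≤ μ k
  μ_sum : ∑ k, μ k = 1
  v_mem : ∀ k, v k ∈ Set.Icc (0 : ℝ) 1
  y_mem : ∀ k, y k ∈ Set.Icc (0 : ℝ) 1

/-- The Net Benefit `Λ(j) = ∑_{k : m·v_k > j} μ_k·(m·y_k − j*)/min(m−j*, j*)`. -/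
noncomputable def netBenefit (m : ℕ) (jstar : ℝ) (C : Config) (j : ℝ) : ℝ :=
  ∑ k, if j < (m : ℝ) * C.v k then
    C.μ k * ((m : ℝ) * C.y k - jstar) / min ((m : ℝ) - jstar) jstar else 0

/-- The regret `regret(j) = sup_{j' ∈ [0,m]} Λ(j') − Λ(j)`. -/
noncomputable def configRegret (m : ℕ) (jstar : ℝ) (C : Config) (j : ℝ) : ℝ :=
  sSup (netBenefit m jstar C '' Set.Icc (0 : ℝ) (m : ℝ)) - netBenefit m jstar C j

/-- Maximum calibration error at most `α`: `|y_k − v_k| ≤ α` whenever `μ_k > 0`. -/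
def MCEle (α : ℝ) (C : Config) : Prop := ∀ k, 0 < C.μ k → |C.y k - C.v k| ≤ α

/-- Expected calibration error at most `α`: `∑_k μ_k·|y_k − v_k| ≤ α`. -/
def ECEle (α : ℝ) (C : Config) : Prop := (∑ k, C.μ k * |C.y k - C.v k|) ≤ α

/-- The worst-case MCE cost `c_MCE(j)`: the supremum of `regret(j)` over all
configurations with MCE at most `α`. -/
noncomputable def cMCE (m : ℕ) (jstar α j : ℝ) : ℝ :=
  sSup {r | ∃ C : Config, MCEle α C ∧ r = configRegret m jstar C j}

/-- The worst-case ECE cost `c_ECE(j)`: the supremum of `regret(j)` over all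
configurations with ECE at most `α`. -/
noncomputable def cECE (m : ℕ) (jstar α j : ℝ) : ℝ :=
  sSup {r | ∃ C : Config, ECEle α C ∧ r = configRegret m jstar C j}

/-!
Net Benefit is linear in the masses: `Λ_C = ∑ₖ μₖ Λ_{δₖ}`, where `δₖ` is the one-point
configuration at `(vₖ, yₖ)`. Hence for every `j'` the gain `Λ_C(j') − Λ_C(j)` is a convex
combination of the gains of the atoms and is dominated by the gain of some atom of positive
mass. Taking the atom of positive mass with the largest regret bounds `regret_C(j)` by a
regret of a constant predictor, and MCE at most `α` passes from `C` to each of its atoms.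
-/

theorem filter_pos_nonempty_of_sum_eq_one {ι : Type*} [Fintype ι] {μ : ι → ℝ}
    (hsum : ∑ k, μ k = 1) : (Finset.univ.filter fun k => 0 < μ k).Nonempty := by
  obtain ⟨k, -, hk⟩ := Finset.exists_lt_of_sum_lt (s := .univ) (f := 0) (g := μ) (by simp [hsum])
  exact ⟨k, Finset.mem_filter.2 ⟨Finset.mem_univ k, hk⟩⟩

theorem exists_pos_and_sum_mul_le {ι : Type*} [Fintype ι] {μ : ι → ℝ} (hμ : ∀ k, 0 ≤ μ k)
    (hsum : ∑ k, μ k = 1) (g : ι → ℝ) : ∃ k, 0 < μ k ∧ ∑ l, μ l * g l ≤ g k := by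
  set s := Finset.univ.filter (fun k => 0 < μ k)
  set avg := ∑ l, μ l * g l
  have restrict : ∀ f : ι → ℝ, ∑ k ∈ s, μ k * f k = ∑ k, μ k * f k := fun f =>
    Finset.sum_filter_of_ne fun k _ hk => (hμ k).lt_of_ne (left_ne_zero_of_mul hk).symm
  have hconst : ∑ k ∈ s, μ k * avg = avg := by
    simpa [← Finset.sum_mul, hsum] using restrict fun _ => avg
  obtain ⟨k, hk, hle⟩ := Finset.exists_le_of_sum_le (filter_pos_nonempty_of_sum_eq_one hsum)
    (f := fun k => μ k * avg) (g := fun k => μ k * g k) (by rw [hconst, restrict])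
  have hk := (Finset.mem_filter.1 hk).2
  exact ⟨k, hk, le_of_mul_le_mul_left hle hk⟩

def Config.atom (C : Config) (k : Fin C.n) : Config where
  n := 1
  μ _ := 1
  v _ := C.v k
  y _ := C.y k
  μ_nonneg _ := zero_le_one
  μ_sum := by simp
  v_mem _ := C.v_mem k
  y_mem _ := C.y_mem k

theorem MCEle.atom {α : ℝ} {C : Config} (hC : MCEle α C) {k : Fin C.n} (hk : 0 < C.μ k) :
    MCEle α (C.atom k) :=
  fun _ _ => hC k hk

section

variable {m : ℕ} {jstar : ℝ}

theorem netBenefit_atom (C : Config) (k : Fin C.n) (x : ℝ) :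
    netBenefit m jstar (C.atom k) x =
      if x < (m : ℝ) * C.v k then ((m : ℝ) * C.y k - jstar) / min ((m : ℝ) - jstar) jstar
      else 0 := by
  rw [netBenefit]
  exact (Fin.sum_univ_one _).trans (by simp [Config.atom])

theorem netBenefit_eq_sum_atom (C : Config) (x : ℝ) :
    netBenefit m jstar C x = ∑ k, C.μ k * netBenefit m jstar (C.atom k) x := by
  rw [netBenefit]
  simp only [netBenefit_atom, mul_ite, mul_zero, mul_div_assoc]

theorem bddAbove_range_netBenefit (C : Config) : BddAbove (Set.range (netBenefit m jstar C)) := by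
  refine ⟨∑ k, |C.μ k * ((m : ℝ) * C.y k - jstar) / min ((m : ℝ) - jstar) jstar|, ?_⟩
  rintro _ ⟨x, rfl⟩
  refine Finset.sum_le_sum fun k _ => ?_
  split_ifs
  · exact le_abs_self _
  · exact abs_nonneg _

theorem sub_le_configRegret (C : Config) {j' : ℝ} (hj' : j' ∈ Set.Icc (0 : ℝ) m) (j : ℝ) :
    netBenefit m jstar C j' - netBenefit m jstar C j ≤ configRegret m jstar C j :=
  sub_le_sub_right
    (le_csSup ((bddAbove_range_netBenefit C).mono (Set.image_subset_range _ _)) ⟨j', hj', rfl⟩) _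

theorem exists_netBenefit_sub_le_atom (C : Config) (j' j : ℝ) :
    ∃ k, 0 < C.μ k ∧ netBenefit m jstar C j' - netBenefit m jstar C j ≤
      netBenefit m jstar (C.atom k) j' - netBenefit m jstar (C.atom k) j := by
  obtain ⟨k, hk, hle⟩ := exists_pos_and_sum_mul_le C.μ_nonneg C.μ_sum
    fun k => netBenefit m jstar (C.atom k) j' - netBenefit m jstar (C.atom k) j
  refine ⟨k, hk, ?_⟩
  rw [netBenefit_eq_sum_atom C j', netBenefit_eq_sum_atom C j, ← Finset.sum_sub_distrib]
  simpa only [mul_sub] using hle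

theorem exists_configRegret_le_atom (C : Config) (j : ℝ) :
    ∃ k, 0 < C.μ k ∧ configRegret m jstar C j ≤ configRegret m jstar (C.atom k) j := by
  obtain ⟨k, hk, hmax⟩ := Finset.exists_max_image _
    (fun k => configRegret m jstar (C.atom k) j) (filter_pos_nonempty_of_sum_eq_one C.μ_sum)
  refine ⟨k, (Finset.mem_filter.1 hk).2, ?_⟩
  rw [configRegret, sub_le_iff_le_add]
  refine csSup_le ((Set.nonempty_Icc.2 m.cast_nonneg).image _) ?_
  rintro _ ⟨j', hj', rfl⟩
  obtain ⟨i, hi, hgain⟩ := exists_netBenefit_sub_le_atom (m := m) (jstar := jstar) C j' j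
  have hregret_i := sub_le_configRegret (jstar := jstar) (C.atom i) hj' j
  have hmax_i := hmax i (Finset.mem_filter.2 ⟨Finset.mem_univ i, hi⟩)
  linarith

end

theorem cMCE_eq_sup_over_constant_configs_general
    (m : ℕ)
    (jstar : ℝ)
    (α : ℝ)
    (j : ℝ) :
    cMCE m jstar α j
      = sSup {r | ∃ C : Config, C.n = 1 ∧ MCEle α C ∧ r = configRegret m jstar C j} := by
  refine csSup_eq_csSup_of_forall_exists_le ?_ ?_
  · rintro _ ⟨C, hC, rfl⟩
    obtain ⟨k, hk, hle⟩ := exists_configRegret_le_atom (m := m) (jstar := jstar) C j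
    exact ⟨_, ⟨C.atom k, rfl, hC.atom hk, rfl⟩, hle⟩
  · rintro _ ⟨C, -, hC, rfl⟩
    exact ⟨_, ⟨C, hC, rfl⟩, le_rfl⟩

/-- **Reduction to constant predictors under MCE.** For every threshold `j ∈ [0,m]`,
the worst-case MCE cost is attained over constant predictors: `c_MCE(j)` equals the
supremum of `regret(j)` taken only over configurations supported on a single value
(`n = 1`) with MCE at most `α`. -/
theorem cMCE_eq_sup_over_constant_configs
    (m : ℕ) (hm : 2 ≤ m)
    (jstar : ℝ) (hjstar1 : 0 < jstar) (hjstar2 : jstar < m)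
    (α : ℝ) (hα1 : 0 < α) (hα2 : α < 1)
    (j : ℝ) (hj : j ∈ Set.Icc (0 : ℝ) (m : ℝ)) :
    cMCE m jstar α j
      = sSup {r | ∃ C : Config, C.n = 1 ∧ MCEle α C ∧ r = configRegret m jstar C j} :=
  cMCE_eq_sup_over_constant_configs_general m jstar α j
end

section
/- (Reduction to two-value predictors under ECE.) For every threshold j ∈ [0,m], the worst-case ECE cost is attained over predictors supported on at most two values: c_ECE(j) equals the supremum of regret(j) taken only over configurations with n ≤ 2 (at most two mass points, with masses μ_1, μ_2 ≥ 0 summing to 1, predicted values v_1, v_2 ∈ [0,1], conditional means y_1, y_2 ∈ [0,1], satisfying the ECE constraint μ_1·|y_1−v_1| + μ_2·|y_2−v_2| ≤ α). -/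
/-!
If `j'` maximises the Net Benefit of a configuration `C`, the regret of `C` at `j` is
`Λ(j') - Λ(j)`, and this difference only involves the points whose scaled prediction `m·v`
lies between `j` and `j'`. Pooling these points into one point, whose prediction and outcome
are their weighted means, and putting the remaining mass on the calibrated point `v = y = 0`,
which is never treated at a nonnegative threshold, keeps `Λ(j') - Λ(j)` unchanged, since the
pooled prediction stays between `j` and `j'` by convexity. By the triangle inequality pooling
does not increase the ECE, and the regret of the pooled configuration is at least `Λ(j') - Λ(j)`.
-/

open Finset

section CenterMass

variable {R E ι : Type*} [Field R] [AddCommGroup E] [Module R E]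
  {t : Finset ι} {w : ι → R}

theorem Finset.sum_smul_centerMass (z : ι → E) (hw : ∑ i ∈ t, w i ≠ 0) :
    (∑ i ∈ t, w i) • t.centerMass w z = ∑ i ∈ t, w i • z i :=
  smul_inv_smul₀ hw _

theorem Convex.centerMass_mem_of_zero_mem [LinearOrder R] [IsStrictOrderedRing R] {s : Set E}
    {z : ι → E} (hs : Convex R s) (h0 : 0 ∈ s) (hw : ∀ i ∈ t, 0 ≤ w i)
    (hz : ∀ i ∈ t, z i ∈ s) : t.centerMass w z ∈ s := by
  rcases (sum_nonneg hw).eq_or_lt with h | h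
  · simpa [Finset.centerMass, ← h] using h0
  · exact hs.centerMass_mem hw h hz

end CenterMass

theorem Finset.sum_mul_abs_centerMass_sub_le {ι : Type*} {t : Finset ι} {w y v : ι → ℝ}
    (hw : ∀ i ∈ t, 0 ≤ w i) :
    (∑ i ∈ t, w i) * |t.centerMass w y - t.centerMass w v| ≤ ∑ i ∈ t, w i * |y i - v i| := by
  rcases (sum_nonneg hw).eq_or_lt with h | h
  · rw [← h, zero_mul]
    exact sum_nonneg fun i hi => mul_nonneg (hw i hi) (abs_nonneg _)
  · calc (∑ i ∈ t, w i) * |t.centerMass w y - t.centerMass w v|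
        = |∑ i ∈ t, w i * (y i - v i)| := by
          rw [← abs_of_pos h, ← abs_mul, mul_sub, ← smul_eq_mul,
            sum_smul_centerMass y h.ne', ← smul_eq_mul, sum_smul_centerMass v h.ne',
            ← sum_sub_distrib]
          simp only [smul_eq_mul, mul_sub]
      _ ≤ ∑ i ∈ t, w i * |y i - v i| := by
          refine (abs_sum_le_sum_abs _ _).trans_eq (sum_congr rfl fun i hi => ?_)
          rw [abs_mul, abs_of_nonneg (hw i hi)]

namespace Config

variable (C : Config)

theorem sum_μ_le_one (B : Finset (Fin C.n)) : ∑ k ∈ B, C.μ k ≤ 1 :=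
  C.μ_sum ▸ sum_le_sum_of_subset_of_nonneg (subset_univ B) fun k _ _ => C.μ_nonneg k

/-- When the weights on `B` sum to `0`, `B.centerMass` is the junk value `0`, a legal
prediction and outcome for the (then massless) pooled point. -/
noncomputable def pool (B : Finset (Fin C.n)) : Config where
  n := 2
  μ := ![∑ k ∈ B, C.μ k, 1 - ∑ k ∈ B, C.μ k]
  v := ![B.centerMass C.μ C.v, 0]
  y := ![B.centerMass C.μ C.y, 0]
  μ_nonneg k := by
    fin_cases k
    · exact sum_nonneg fun k _ => C.μ_nonneg k
    · exact sub_nonneg.2 (C.sum_μ_le_one B)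
  μ_sum := by simp
  v_mem k := by
    fin_cases k
    · exact (convex_Icc 0 1).centerMass_mem_of_zero_mem (by simp)
        (fun k _ => C.μ_nonneg k) fun k _ => C.v_mem k
    · simp
  y_mem k := by
    fin_cases k
    · exact (convex_Icc 0 1).centerMass_mem_of_zero_mem (by simp)
        (fun k _ => C.μ_nonneg k) fun k _ => C.y_mem k
    · simp

theorem ECEle_pool {α : ℝ} (hC : ECEle α C) (B : Finset (Fin C.n)) : ECEle α (C.pool B) := by
  have hB : ∑ k ∈ B, C.μ k * |C.y k - C.v k| ≤ α :=
    (sum_le_sum_of_subset_of_nonneg (subset_univ B) fun k _ _ =>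
      mul_nonneg (C.μ_nonneg k) (abs_nonneg _)).trans hC
  rw [ECEle, pool, Fin.sum_univ_two]
  simpa using (sum_mul_abs_centerMass_sub_le fun k _ => C.μ_nonneg k).trans hB

theorem netBenefit_pool (m : ℕ) (jstar : ℝ) (B : Finset (Fin C.n)) {t : ℝ} (ht : 0 ≤ t) :
    netBenefit m jstar (C.pool B) t =
      if t < m * B.centerMass C.μ C.v then
        (∑ k ∈ B, C.μ k) * (m * B.centerMass C.μ C.y - jstar) / min (m - jstar) jstar
      else 0 := by
  rw [netBenefit, pool, Fin.sum_univ_two]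
  simp only [Matrix.cons_val_zero, Matrix.cons_val_one, mul_zero, ht.not_gt, if_false, add_zero]
  rfl

noncomputable def window (m : ℕ) (a b : ℝ) : Finset (Fin C.n) :=
  univ.filter fun k => a < m * C.v k ∧ m * C.v k ≤ b

theorem netBenefit_sub_netBenefit (m : ℕ) (jstar : ℝ) {a b : ℝ} (hab : a ≤ b) :
    netBenefit m jstar C a - netBenefit m jstar C b =
      ∑ k ∈ C.window m a b, C.μ k * (m * C.y k - jstar) / min (m - jstar) jstar := by
  rw [window, sum_filter, netBenefit, netBenefit, ← sum_sub_distrib]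
  refine sum_congr rfl fun k _ => ?_
  split_ifs <;> grind

theorem netBenefit_pool_window_sub (m : ℕ) (jstar : ℝ) {a b : ℝ} (ha : 0 ≤ a) (hab : a ≤ b) :
    netBenefit m jstar (C.pool (C.window m a b)) a -
        netBenefit m jstar (C.pool (C.window m a b)) b =
      netBenefit m jstar C a - netBenefit m jstar C b := by
  set B := C.window m a b
  have hμ : ∀ k ∈ B, 0 ≤ C.μ k := fun k _ => C.μ_nonneg k
  rw [C.netBenefit_sub_netBenefit m jstar hab, C.netBenefit_pool m jstar B ha,
    C.netBenefit_pool m jstar B (ha.trans hab)]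
  rcases (sum_nonneg hμ).eq_or_lt with hM | hM
  · have hμ0 := (sum_eq_zero_iff_of_nonneg hμ).1 hM.symm
    rw [← hM, sum_eq_zero fun k hk => by rw [hμ0 k hk, zero_mul, zero_div]]
    simp
  · have hv : m * B.centerMass C.μ C.v ∈ Set.Ioc a b := by
      rw [← smul_eq_mul, ← centerMass_smul]
      exact (convex_Ioc a b).centerMass_mem hμ hM fun k hk => (mem_filter.1 hk).2
    rw [if_pos hv.1, if_neg hv.2.not_gt, sub_zero, ← sum_div, mul_sub, mul_left_comm,
      ← smul_eq_mul _ (B.centerMass _ _), sum_smul_centerMass _ hM.ne', mul_sum, sum_mul,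
      ← sum_sub_distrib]
    exact congrArg (· / _) (sum_congr rfl fun k _ => by simp only [smul_eq_mul]; ring)

end Config

theorem finite_range_netBenefit (m : ℕ) (jstar : ℝ) (C : Config) :
    (Set.range (netBenefit m jstar C)).Finite := by
  refine (Set.finite_range fun S : Finset (Fin C.n) =>
    ∑ k ∈ S, C.μ k * (m * C.y k - jstar) / min (m - jstar) jstar).subset ?_
  rintro _ ⟨t, rfl⟩
  exact ⟨univ.filter fun k => t < m * C.v k, sum_filter _ _⟩

theorem exists_netBenefit_eq_sSup (m : ℕ) (jstar : ℝ) (C : Config) :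
    ∃ j' ∈ Set.Icc (0 : ℝ) m,
      netBenefit m jstar C j' = sSup (netBenefit m jstar C '' Set.Icc (0 : ℝ) m) :=
  ((Set.nonempty_Icc.2 (Nat.cast_nonneg m)).image _).csSup_mem
    ((finite_range_netBenefit m jstar C).subset (Set.image_subset_range _ _))

theorem netBenefit_sub_le_configRegret (m : ℕ) (jstar : ℝ) (C : Config) {j' : ℝ}
    (hj' : j' ∈ Set.Icc (0 : ℝ) m) (j : ℝ) :
    netBenefit m jstar C j' - netBenefit m jstar C j ≤ configRegret m jstar C j :=
  sub_le_sub_right (le_csSup ((finite_range_netBenefit m jstar C).subset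
    (Set.image_subset_range _ _)).bddAbove (Set.mem_image_of_mem _ hj')) _

theorem exists_two_value_configRegret_ge (m : ℕ) (jstar : ℝ) {α : ℝ} {C : Config}
    (hC : ECEle α C) {j : ℝ} (hj : 0 ≤ j) :
    ∃ C₂ : Config, C₂.n ≤ 2 ∧ ECEle α C₂ ∧
      configRegret m jstar C j ≤ configRegret m jstar C₂ j := by
  obtain ⟨j', hj', hmax⟩ := exists_netBenefit_eq_sSup m jstar C
  have hpool : ∃ B, netBenefit m jstar (C.pool B) j' - netBenefit m jstar (C.pool B) j =
      netBenefit m jstar C j' - netBenefit m jstar C j := by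
    rcases le_total j' j with h | h
    · exact ⟨_, C.netBenefit_pool_window_sub m jstar hj'.1 h⟩
    · exact ⟨_, by linarith [C.netBenefit_pool_window_sub m jstar hj h]⟩
  obtain ⟨B, hB⟩ := hpool
  refine ⟨C.pool B, le_rfl, C.ECEle_pool hC B, ?_⟩
  calc configRegret m jstar C j = netBenefit m jstar C j' - netBenefit m jstar C j := by
        rw [configRegret, hmax]
    _ = netBenefit m jstar (C.pool B) j' - netBenefit m jstar (C.pool B) j := hB.symm
    _ ≤ configRegret m jstar (C.pool B) j := netBenefit_sub_le_configRegret m jstar _ hj' j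

theorem cECE_eq_sup_over_two_value_configs_general
    (m : ℕ)
    (jstar : ℝ)
    (α : ℝ)
    (j : ℝ) (hj : j ∈ Set.Icc (0 : ℝ) (m : ℝ)) :
    cECE m jstar α j
      = sSup {r | ∃ C : Config, C.n ≤ 2 ∧ ECEle α C ∧ r = configRegret m jstar C j} := by
  refine csSup_eq_csSup_of_forall_exists_le ?_ ?_
  · rintro _ ⟨C, hC, rfl⟩
    obtain ⟨C₂, hn, hC₂, hle⟩ := exists_two_value_configRegret_ge m jstar hC hj.1
    exact ⟨_, ⟨C₂, hn, hC₂, rfl⟩, hle⟩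
  · rintro _ ⟨C, -, hC, rfl⟩
    exact ⟨_, ⟨C, hC, rfl⟩, le_rfl⟩

/-- **Reduction to two-value predictors under ECE.** For every threshold `j ∈ [0,m]`,
the worst-case ECE cost is attained over predictors supported on at most two values:
`c_ECE(j)` equals the supremum of `regret(j)` taken only over configurations with
`n ≤ 2` and ECE at most `α`. -/
theorem cECE_eq_sup_over_two_value_configs
    (m : ℕ) (hm : 2 ≤ m)
    (jstar : ℝ) (hjstar1 : 0 < jstar) (hjstar2 : jstar < m)
    (α : ℝ) (hα1 : 0 < α) (hα2 : α < 1)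
    (j : ℝ) (hj : j ∈ Set.Icc (0 : ℝ) (m : ℝ)) :
    cECE m jstar α j
      = sSup {r | ∃ C : Config, C.n ≤ 2 ∧ ECEle α C ∧ r = configRegret m jstar C j} :=
  cECE_eq_sup_over_two_value_configs_general m jstar α j hj
end

section
/- (Closed form for the under-treatment optimization problem under ECE.) Let m ≥ 2 be an integer, j* real with 0 < j* < m, α ∈ [0,1], and j ∈ [0,m]. Define S(j) as the supremum of μ·(m·(v+δ) − j*) over all μ ∈ [0,1], v ∈ [0, j/m], δ ∈ [0, 1−v] satisfying μ·δ ≤ α. Then: S(j) = j − j* + αm whenever j* ≤ j ≤ (1−α)m; S(j) = m − j* whenever j ≥ j* and j ≥ (1−α)m; and S(j) = αm·(m−j*)/(m−j) whenever j ≤ j*, j ≤ (1−α)m and j < m. -/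
/-!
The regret `μ·(m(v+δ) − j*)` is largest at `v = j/m`, the top of the untreated range, so every
optimum has the form `μ·(j + mδ − j*)`. Splitting it as `μ·(m(v+δ) − j) + μ·(j − j*)`, the first
term is at most `αm` by the calibration budget `μδ ≤ α`. If `j ≥ j*` the second is at most
`j − j*` (take `μ = 1`), unless the constraint `δ ≤ 1 − v` binds first, capping the regret at
`m − j*`. If `j ≤ j*` the second term is a loss, and the best trade-off is to spend the whole
budget on the smallest population `μ = αm/(m − j)` with `δ = 1 − j/m`.
-/

open Set

def underTreatmentRegrets (M jstar α j : ℝ) : Set ℝ :=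
  {r | ∃ μ v δ : ℝ, μ ∈ Icc (0 : ℝ) 1 ∧ v ∈ Icc (0 : ℝ) (j / M) ∧ δ ∈ Icc (0 : ℝ) (1 - v) ∧
    μ * δ ≤ α ∧ r = μ * (M * (v + δ) - jstar)}

namespace underTreatmentRegrets

variable {M jstar α j μ v δ : ℝ}

lemma mul_add_sub_mem (hM : 0 < M) (hj : 0 ≤ j) (hμ : μ ∈ Icc (0 : ℝ) 1)
    (hδ : δ ∈ Icc (0 : ℝ) (1 - j / M)) (hμδ : μ * δ ≤ α) :
    μ * (j + M * δ - jstar) ∈ underTreatmentRegrets M jstar α j :=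
  ⟨μ, j / M, δ, hμ, ⟨div_nonneg hj hM.le, le_rfl⟩, hδ, hμδ, by field_simp⟩

lemma mul_sub_le_mul (hM : 0 < M) (hμ : 0 ≤ μ) (hv : v ≤ j / M) (hμδ : μ * δ ≤ α) :
    μ * (M * (v + δ) - j) ≤ α * M := by
  have hvj : M * v ≤ j := by rwa [le_div_iff₀' hM] at hv
  calc μ * (M * (v + δ) - j) = μ * (M * v - j) + M * (μ * δ) := by ring
    _ ≤ 0 + M * α := by
        gcongr
        · exact mul_nonpos_of_nonneg_of_nonpos hμ (by linarith)
    _ = α * M := by ring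

end underTreatmentRegrets

open underTreatmentRegrets

variable {M jstar α j : ℝ}

lemma isGreatest_underTreatmentRegrets_of_le_of_le_one_sub_mul (hM : 0 < M) (hj : 0 ≤ j)
    (hα : 0 ≤ α) (hjstar : jstar ≤ j) (hjα : j ≤ (1 - α) * M) :
    IsGreatest (underTreatmentRegrets M jstar α j) (j - jstar + α * M) := by
  have hαj : α ≤ 1 - j / M := by
    rw [le_sub_comm, div_le_iff₀ hM]; exact hjα
  constructor
  · convert mul_add_sub_mem (jstar := jstar) hM hj (μ := 1) ⟨zero_le_one, le_rfl⟩ ⟨hα, hαj⟩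
      (by rw [one_mul]) using 1
    ring
  · rintro _ ⟨μ, v, δ, ⟨hμ0, hμ1⟩, ⟨-, hv⟩, -, hμδ, rfl⟩
    have hexcess := mul_sub_le_mul hM hμ0 hv hμδ
    have hloss : μ * (j - jstar) ≤ j - jstar := mul_le_of_le_one_left (by linarith) hμ1
    linear_combination hexcess + hloss

lemma isGreatest_underTreatmentRegrets_of_le_of_one_sub_mul_le (hM : 0 < M)
    (hj : j ∈ Icc 0 M) (hjstar : jstar ≤ j) (hjα : (1 - α) * M ≤ j) :
    IsGreatest (underTreatmentRegrets M jstar α j) (M - jstar) := by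
  have hαj : 1 - j / M ≤ α := by
    rw [sub_le_comm, le_div_iff₀ hM]; exact hjα
  have hjM : 0 ≤ 1 - j / M := by
    rw [sub_nonneg, div_le_one hM]; exact hj.2
  constructor
  · convert mul_add_sub_mem (jstar := jstar) (α := α) hM hj.1 (μ := 1) ⟨zero_le_one, le_rfl⟩
      ⟨hjM, le_rfl⟩ (by rwa [one_mul]) using 1
    field_simp
    ring
  · rintro _ ⟨μ, v, δ, ⟨hμ0, hμ1⟩, -, ⟨-, hδ⟩, -, rfl⟩
    calc μ * (M * (v + δ) - jstar) ≤ μ * (M - jstar) := by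
          gcongr
          exact mul_le_of_le_one_right hM.le (by linarith)
      _ ≤ M - jstar := mul_le_of_le_one_left (by linarith [hj.2]) hμ1

lemma isGreatest_underTreatmentRegrets_of_ge_of_le_one_sub_mul (hM : 0 < M) (hj : 0 ≤ j)
    (hjM : j < M) (hα : 0 ≤ α) (hjstar : j ≤ jstar) (hjstarM : jstar ≤ M)
    (hjα : j ≤ (1 - α) * M) :
    IsGreatest (underTreatmentRegrets M jstar α j) (α * M * (M - jstar) / (M - j)) := by
  have hMj : 0 < M - j := sub_pos.mpr hjM
  have hjM' : 0 ≤ 1 - j / M := by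
    rw [sub_nonneg, div_le_one hM]; exact hjM.le
  have hμ : α * M / (M - j) ∈ Icc (0 : ℝ) 1 :=
    ⟨by positivity, by rw [div_le_one hMj]; linarith⟩
  have hμδ : α * M / (M - j) * (1 - j / M) = α := by
    field_simp
  constructor
  · convert mul_add_sub_mem (jstar := jstar) hM hj hμ ⟨hjM', le_rfl⟩ hμδ.le using 1
    field_simp
    ring
  · rintro _ ⟨μ, v, δ, ⟨hμ0, -⟩, ⟨-, hv⟩, ⟨-, hδ⟩, hμδ, rfl⟩
    rw [le_div_iff₀ hMj]
    -- The two sides differ by `μ M (j* − j)(1 − v − δ) ≥ 0`.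
    have hshift : μ * (M * (v + δ) - jstar) * (M - j) ≤ μ * (M * (v + δ) - j) * (M - jstar) := by
      have hgap : 0 ≤ jstar - j := by linarith
      have hslack : 0 ≤ 1 - v - δ := by linarith
      have hcost : 0 ≤ μ * M * (jstar - j) * (1 - v - δ) := by positivity
      linear_combination hcost
    calc μ * (M * (v + δ) - jstar) * (M - j) ≤ μ * (M * (v + δ) - j) * (M - jstar) := hshift
      _ ≤ α * M * (M - jstar) :=
          mul_le_mul_of_nonneg_right (mul_sub_le_mul hM hμ0 hv hμδ) (by linarith)

theorem under_treatment_opt_closed_form_general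
    (m : ℕ) (hm : 2 ≤ m)
    (jstar : ℝ) (hjstar2 : jstar < m)
    (α : ℝ) (hα : α ∈ Set.Icc (0 : ℝ) 1)
    (j : ℝ) (hj : j ∈ Set.Icc (0 : ℝ) (m : ℝ)) :
    let S : ℝ := sSup {r | ∃ μ v δ : ℝ,
      μ ∈ Set.Icc (0 : ℝ) 1 ∧ v ∈ Set.Icc (0 : ℝ) (j / m) ∧ δ ∈ Set.Icc (0 : ℝ) (1 - v) ∧
      μ * δ ≤ α ∧ r = μ * ((m : ℝ) * (v + δ) - jstar)}
    (jstar ≤ j → j ≤ (1 - α) * m → S = j - jstar + α * m) ∧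
    (jstar ≤ j → (1 - α) * m ≤ j → S = (m : ℝ) - jstar) ∧
    (j ≤ jstar → j ≤ (1 - α) * m → j < m → S = α * m * ((m : ℝ) - jstar) / ((m : ℝ) - j)) := by
  have hm0 : (0 : ℝ) < m := Nat.cast_pos.mpr (by omega)
  exact ⟨fun h₁ h₂ =>
      (isGreatest_underTreatmentRegrets_of_le_of_le_one_sub_mul hm0 hj.1 hα.1 h₁ h₂).csSup_eq,
    fun h₁ h₂ => (isGreatest_underTreatmentRegrets_of_le_of_one_sub_mul_le hm0 hj h₁ h₂).csSup_eq,
    fun h₁ h₂ h₃ => (isGreatest_underTreatmentRegrets_of_ge_of_le_one_sub_mul hm0 hj.1 h₃ hα.1 h₁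
      hjstar2.le h₂).csSup_eq⟩

/-- **Closed form for the under-treatment optimization problem under ECE.**
Let `m ≥ 2`, `0 < j* < m`, `α ∈ [0,1]`, `j ∈ [0,m]`, and let `S(j)` be the supremum of
`μ·(m·(v+δ) − j*)` over `μ ∈ [0,1]`, `v ∈ [0, j/m]`, `δ ∈ [0, 1−v]` with `μ·δ ≤ α`.
Then `S(j) = j − j* + αm` for `j* ≤ j ≤ (1−α)m`; `S(j) = m − j*` for `j ≥ j*` and
`j ≥ (1−α)m`; and `S(j) = αm·(m−j*)/(m−j)` for `j ≤ j*`, `j ≤ (1−α)m`, `j < m`. -/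
theorem under_treatment_opt_closed_form
    (m : ℕ) (hm : 2 ≤ m)
    (jstar : ℝ) (hjstar1 : 0 < jstar) (hjstar2 : jstar < m)
    (α : ℝ) (hα : α ∈ Set.Icc (0 : ℝ) 1)
    (j : ℝ) (hj : j ∈ Set.Icc (0 : ℝ) (m : ℝ)) :
    let S : ℝ := sSup {r | ∃ μ v δ : ℝ,
      μ ∈ Set.Icc (0 : ℝ) 1 ∧ v ∈ Set.Icc (0 : ℝ) (j / m) ∧ δ ∈ Set.Icc (0 : ℝ) (1 - v) ∧
      μ * δ ≤ α ∧ r = μ * ((m : ℝ) * (v + δ) - jstar)}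
    (jstar ≤ j → j ≤ (1 - α) * m → S = j - jstar + α * m) ∧
    (jstar ≤ j → (1 - α) * m ≤ j → S = (m : ℝ) - jstar) ∧
    (j ≤ jstar → j ≤ (1 - α) * m → j < m → S = α * m * ((m : ℝ) - jstar) / ((m : ℝ) - j)) :=
  under_treatment_opt_closed_form_general m hm jstar hjstar2 α hα j hj
end

section
/- (Closed form for the over-treatment optimization problem under ECE.) Let m ≥ 2 be an integer, j* real with 0 < j* < m, α ∈ [0,1], and j ∈ [0,m]. Define T(j) as the supremum of μ·(j* − m·(v−δ)) over all μ ∈ [0,1], v ∈ [j/m, 1], δ ∈ [0, v] satisfying μ·δ ≤ α. Then: T(j) = j* − j + αm whenever αm ≤ j ≤ j*; T(j) = j* whenever j ≤ j* and j ≤ αm; and T(j) = αm·j*/j whenever j ≥ j*, j ≥ αm and j > 0. -/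
/-!
Every admissible value is at most `μ·j*` (as `v ≥ δ`) and at most `μ·(j* − j) + αm`
(as `m·v ≥ j` and `μ·δ ≤ α`), so `T(j)` is at most the maximum over `μ ∈ [0,1]` of the
smaller of these two lines. In each regime that maximum is attained at `v = j/m`: with
`μ = 1, δ = α` in the middle regime, `μ = 1, δ = v` when `j ≤ αm`, and `μ = αm/j, δ = v`
(where the two lines cross) when `j ≥ j*`.
-/

open Set

/-- The set whose supremum is `T(j)`, with `c` in the role of `m`. -/
def overTreatmentRegrets (c jstar α j : ℝ) : Set ℝ :=
  {r | ∃ μ v δ : ℝ, μ ∈ Icc (0 : ℝ) 1 ∧ v ∈ Icc (j / c) 1 ∧ δ ∈ Icc (0 : ℝ) v ∧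
    μ * δ ≤ α ∧ r = μ * (jstar - c * (v - δ))}

lemma le_mul_div_of_le_mul_of_le_mul_sub_add {r μ a b j : ℝ} (hj : 0 < j) (ha : 0 ≤ a)
    (haj : a ≤ j) (h₁ : r ≤ μ * a) (h₂ : r ≤ μ * (a - j) + b) : r ≤ b * a / j := by
  rw [le_div_iff₀ hj]
  rcases le_total (μ * j) b with h | h
  · nlinarith [mul_le_mul_of_nonneg_right h ha]
  · nlinarith [mul_le_mul_of_nonneg_right h (sub_nonneg.mpr haj)]

section OverTreatment

variable {c jstar α j : ℝ}

lemma exists_bounds_of_mem_overTreatmentRegrets (hc : 0 < c) {r : ℝ}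
    (hr : r ∈ overTreatmentRegrets c jstar α j) :
    ∃ μ ∈ Icc (0 : ℝ) 1, r ≤ μ * jstar ∧ r ≤ μ * (jstar - j) + α * c := by
  obtain ⟨μ, v, δ, hμ, ⟨hjv, -⟩, ⟨-, hδv⟩, hμδ, rfl⟩ := hr
  have hj : j ≤ c * v := by rwa [div_le_iff₀' hc] at hjv
  refine ⟨μ, hμ, ?_, ?_⟩
  · nlinarith [mul_nonneg hμ.1 (mul_nonneg hc.le (sub_nonneg.mpr hδv))]
  · nlinarith [mul_le_mul_of_nonneg_left hj hμ.1, mul_le_mul_of_nonneg_left hμδ hc.le]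

lemma mul_mem_overTreatmentRegrets (hc : 0 < c) (hjc : j ≤ c) {μ δ : ℝ}
    (hμ : μ ∈ Icc (0 : ℝ) 1) (hδ : δ ∈ Icc 0 (j / c)) (hμδ : μ * δ ≤ α) :
    μ * (jstar - j + c * δ) ∈ overTreatmentRegrets c jstar α j := by
  refine ⟨μ, j / c, δ, hμ, ⟨le_rfl, (div_le_one hc).mpr hjc⟩, hδ, hμδ, ?_⟩
  rw [mul_sub c, mul_div_cancel₀ _ hc.ne']
  ring

lemma isGreatest_overTreatmentRegrets_sub_add (hc : 0 < c) (hα : 0 ≤ α) (hαj : α * c ≤ j)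
    (hj : j ≤ jstar) (hjc : j ≤ c) :
    IsGreatest (overTreatmentRegrets c jstar α j) (jstar - j + α * c) := by
  refine ⟨?_, fun r hr => ?_⟩
  · simpa [mul_comm c] using mul_mem_overTreatmentRegrets (jstar := jstar) hc hjc
      (right_mem_Icc.mpr zero_le_one) ⟨hα, (le_div_iff₀ hc).mpr hαj⟩ (one_mul α).le
  · obtain ⟨μ, hμ, -, hr⟩ := exists_bounds_of_mem_overTreatmentRegrets hc hr
    nlinarith [mul_le_of_le_one_left (sub_nonneg.mpr hj) hμ.2]

lemma isGreatest_overTreatmentRegrets_jstar (hc : 0 < c) (hjstar : 0 ≤ jstar) (hj : 0 ≤ j)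
    (hjc : j ≤ c) (hjα : j ≤ α * c) :
    IsGreatest (overTreatmentRegrets c jstar α j) jstar := by
  refine ⟨?_, fun r hr => ?_⟩
  · have hδα : j / c ≤ α := (div_le_iff₀ hc).mpr hjα
    simpa [mul_div_cancel₀ _ hc.ne'] using mul_mem_overTreatmentRegrets (jstar := jstar) hc hjc
      (right_mem_Icc.mpr zero_le_one) ⟨div_nonneg hj hc.le, le_rfl⟩ (by simpa using hδα)
  · obtain ⟨μ, hμ, hr, -⟩ := exists_bounds_of_mem_overTreatmentRegrets hc hr
    exact hr.trans (mul_le_of_le_one_left hjstar hμ.2)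

lemma isGreatest_overTreatmentRegrets_mul_div (hc : 0 < c) (hjstar : 0 ≤ jstar) (hα : 0 ≤ α)
    (hj : 0 < j) (hjc : j ≤ c) (hjj : jstar ≤ j) (hαj : α * c ≤ j) :
    IsGreatest (overTreatmentRegrets c jstar α j) (α * c * jstar / j) := by
  refine ⟨?_, fun r hr => ?_⟩
  · have hμ : α * c / j ∈ Icc (0 : ℝ) 1 :=
      ⟨by positivity, (div_le_one hj).mpr hαj⟩
    have hμδ : α * c / j * (j / c) ≤ α := by
      rw [div_mul_div_cancel₀ hj.ne', mul_div_cancel_right₀ _ hc.ne']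
    simpa [mul_div_cancel₀ _ hc.ne', div_mul_eq_mul_div] using
      mul_mem_overTreatmentRegrets (jstar := jstar) hc hjc hμ ⟨div_nonneg hj.le hc.le, le_rfl⟩
        hμδ
  · obtain ⟨μ, -, hr₁, hr₂⟩ := exists_bounds_of_mem_overTreatmentRegrets hc hr
    exact le_mul_div_of_le_mul_of_le_mul_sub_add hj hjstar hjj hr₁ hr₂

end OverTreatment

theorem over_treatment_opt_closed_form_general
    (m : ℕ)
    (jstar : ℝ) (hjstar1 : 0 < jstar) (hjstar2 : jstar < m)
    (α : ℝ) (hα : α ∈ Set.Icc (0 : ℝ) 1)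
    (j : ℝ) (hj : j ∈ Set.Icc (0 : ℝ) (m : ℝ)) :
    let T : ℝ := sSup {r | ∃ μ v δ : ℝ,
      μ ∈ Set.Icc (0 : ℝ) 1 ∧ v ∈ Set.Icc (j / m) 1 ∧ δ ∈ Set.Icc (0 : ℝ) v ∧
      μ * δ ≤ α ∧ r = μ * (jstar - (m : ℝ) * (v - δ))}
    (α * m ≤ j → j ≤ jstar → T = jstar - j + α * m) ∧
    (j ≤ jstar → j ≤ α * m → T = jstar) ∧
    (jstar ≤ j → α * m ≤ j → 0 < j → T = α * m * jstar / j) := by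
  have hm : (0 : ℝ) < m := hjstar1.trans hjstar2
  obtain ⟨hα0, -⟩ := hα
  obtain ⟨hj0, hjm⟩ := hj
  exact ⟨fun hαj hjj => (isGreatest_overTreatmentRegrets_sub_add hm hα0 hαj hjj hjm).csSup_eq,
    fun _ hjα => (isGreatest_overTreatmentRegrets_jstar hm hjstar1.le hj0 hjm hjα).csSup_eq,
    fun hjj hαj hjpos => (isGreatest_overTreatmentRegrets_mul_div hm hjstar1.le hα0 hjpos hjm hjj
      hαj).csSup_eq⟩

/-- **Closed form for the over-treatment optimization problem under ECE.**
Let `m ≥ 2`, `0 < j* < m`, `α ∈ [0,1]`, `j ∈ [0,m]`, and let `T(j)` be the supremum of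
`μ·(j* − m·(v−δ))` over `μ ∈ [0,1]`, `v ∈ [j/m, 1]`, `δ ∈ [0, v]` with `μ·δ ≤ α`.
Then `T(j) = j* − j + αm` for `αm ≤ j ≤ j*`; `T(j) = j*` for `j ≤ j*` and `j ≤ αm`; and
`T(j) = αm·j*/j` for `j ≥ j*`, `j ≥ αm`, `j > 0`. -/
theorem over_treatment_opt_closed_form
    (m : ℕ) (hm : 2 ≤ m)
    (jstar : ℝ) (hjstar1 : 0 < jstar) (hjstar2 : jstar < m)
    (α : ℝ) (hα : α ∈ Set.Icc (0 : ℝ) 1)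
    (j : ℝ) (hj : j ∈ Set.Icc (0 : ℝ) (m : ℝ)) :
    let T : ℝ := sSup {r | ∃ μ v δ : ℝ,
      μ ∈ Set.Icc (0 : ℝ) 1 ∧ v ∈ Set.Icc (j / m) 1 ∧ δ ∈ Set.Icc (0 : ℝ) v ∧
      μ * δ ≤ α ∧ r = μ * (jstar - (m : ℝ) * (v - δ))}
    (α * m ≤ j → j ≤ jstar → T = jstar - j + α * m) ∧
    (j ≤ jstar → j ≤ α * m → T = jstar) ∧
    (jstar ≤ j → α * m ≤ j → 0 < j → T = α * m * jstar / j) :=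
  over_treatment_opt_closed_form_general m jstar hjstar1 hjstar2 α hα j hj
end

section
/- (Closed form for the worst-case ECE regret of two-value predictors.) Let m ≥ 2 be an integer, j* real with 0 < j* < m, and α ∈ (0,1), and assume αm ≤ min{j*, m−j*}. For every threshold j ∈ [0,m], the supremum of regret(j) over all configurations with n ≤ 2 (at most two mass points) and ECE at most α equals (1/min{m−j*, j*}) times: max{ j*, αm·(m−j*)/(m−j) } if j < j* and j ≤ αm; max{ j*−j+αm, αm·(m−j*)/(m−j) } if αm < j ≤ j*; max{ j−j*+αm, αm·j*/j } if j* < j ≤ (1−α)m; and max{ m−j*, αm·j*/j } if j ≥ j* and j > (1−α)m. -/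
/-!
Moving the threshold from `j` to `j'` changes the Net Benefit only through the mass points whose
scaled prediction `m·v` lies between the two: lowering it adds points with `m·v ≤ j`, each worth
`m·y − j*`, raising it removes points with `m·v > j`, each worth `j* − m·y`. Each such value is at
most an affine function `a + b·|y − v|` of the point's calibration error, so averaging against `μ`
turns `ECE ≤ α` into the bound `(a + b·α) / min(m − j*, j*)` on the regret, whatever the number of
points. Single points of full mass with `|y − v| = α` (or with `y` saturated at `0` or `1`) attain
these bounds; since the threshold comparison is strict, the removal bound is only approached as
`m·v ↓ j`. In each of the four regimes the second argument of the `max` is dominated by the first.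
-/

open Set Filter Topology

def Config.single (v y : ℝ) (hv : v ∈ Icc (0 : ℝ) 1) (hy : y ∈ Icc (0 : ℝ) 1) : Config where
  n := 1
  μ _ := 1
  v _ := v
  y _ := y
  μ_nonneg _ := zero_le_one
  μ_sum := by simp
  v_mem _ := hv
  y_mem _ := hy

def twoPointRegrets (m : ℕ) (jstar α j : ℝ) : Set ℝ :=
  {r | ∃ C : Config, C.n ≤ 2 ∧ ECEle α C ∧ r = configRegret m jstar C j}

theorem Config.abs_sub_le_one (C : Config) (k : Fin C.n) : |C.y k - C.v k| ≤ 1 := by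
  have hv := C.v_mem k
  have hy := C.y_mem k
  exact abs_sub_le_iff.2 ⟨by linarith [hy.2, hv.1], by linarith [hv.2, hy.1]⟩

section

variable {M v y j jstar : ℝ}

theorem mul_sub_le_of_mul_le (hM : 0 ≤ M) (hv : M * v ≤ j) :
    M * y - jstar ≤ j - jstar + M * |y - v| := by
  nlinarith [mul_le_mul_of_nonneg_left (le_abs_self (y - v)) hM]

theorem sub_mul_le_of_lt_mul (hM : 0 ≤ M) (hv : j < M * v) :
    jstar - M * y ≤ jstar - j + M * |y - v| := by
  nlinarith [mul_le_mul_of_nonneg_left (neg_abs_le (y - v)) hM]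

theorem mul_sub_le_mul_abs_of_le (hM : 0 ≤ M) (hv : M * v ≤ j) (hj : j ≤ jstar)
    (he : |y - v| ≤ 1) : M * y - jstar ≤ (M - jstar + j) * |y - v| := by
  nlinarith [mul_sub_le_of_mul_le (jstar := jstar) (y := y) hM hv,
    mul_nonneg (sub_nonneg.2 hj) (sub_nonneg.2 he)]

theorem sub_mul_le_mul_abs_of_le (hM : 0 ≤ M) (hv : j < M * v) (hj : jstar ≤ j)
    (he : |y - v| ≤ 1) : jstar - M * y ≤ (M + jstar - j) * |y - v| := by
  nlinarith [sub_mul_le_of_lt_mul (jstar := jstar) (y := y) hM hv,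
    mul_nonneg (sub_nonneg.2 hj) (sub_nonneg.2 he)]

end

theorem sSup_eq_of_forall_le_of_mem_closure {α : Type*} [ConditionallyCompleteLinearOrder α]
    [TopologicalSpace α] [OrderTopology α] {s : Set α} {a : α} (h : ∀ x ∈ s, x ≤ a)
    (ha : a ∈ closure s) : sSup s = a :=
  (isLUB_of_mem_closure h ha).csSup_eq (closure_nonempty_iff.1 ⟨a, ha⟩)

section

variable {m : ℕ} {jstar α j : ℝ}

section Single

variable {v y : ℝ} {hv : v ∈ Icc (0 : ℝ) 1} {hy : y ∈ Icc (0 : ℝ) 1}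

theorem netBenefit_single (j : ℝ) :
    netBenefit m jstar (Config.single v y hv hy) j =
      if j < m * v then (m * y - jstar) / min ((m : ℝ) - jstar) jstar else 0 := by
  change (∑ _k : Fin 1, if j < (m : ℝ) * v then
    1 * ((m : ℝ) * y - jstar) / min ((m : ℝ) - jstar) jstar else 0) = _
  simp

theorem configRegret_single (h : 0 < m * v) :
    configRegret m jstar (Config.single v y hv hy) j =
      max ((m * y - jstar) / min ((m : ℝ) - jstar) jstar) 0 -
        netBenefit m jstar (Config.single v y hv hy) j := by
  have hvm : (m : ℝ) * v ≤ m := mul_le_of_le_one_right (Nat.cast_nonneg m) hv.2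
  have himage : netBenefit m jstar (Config.single v y hv hy) '' Icc 0 m =
      {(m * y - jstar) / min ((m : ℝ) - jstar) jstar, 0} := by
    ext r
    simp only [mem_image, mem_insert_iff, mem_singleton_iff, netBenefit_single]
    constructor
    · rintro ⟨t, -, rfl⟩
      split_ifs <;> simp
    · rintro (rfl | rfl)
      · exact ⟨0, ⟨le_rfl, Nat.cast_nonneg m⟩, if_pos h⟩
      · exact ⟨m, ⟨Nat.cast_nonneg m, le_rfl⟩, if_neg (not_lt.2 hvm)⟩
  rw [configRegret, himage, csSup_pair]

theorem configRegret_single_of_lt (hc : 0 ≤ min ((m : ℝ) - jstar) jstar) (hj : 0 ≤ j)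
    (hjv : j < m * v) (hyj : m * y ≤ jstar) :
    configRegret m jstar (Config.single v y hv hy) j =
      (jstar - m * y) / min ((m : ℝ) - jstar) jstar := by
  rw [configRegret_single (hj.trans_lt hjv), netBenefit_single, if_pos hjv,
    max_eq_right (div_nonpos_of_nonpos_of_nonneg (sub_nonpos.2 hyj) hc)]
  ring

theorem configRegret_single_of_le (hc : 0 ≤ min ((m : ℝ) - jstar) jstar) (hv0 : 0 < m * v)
    (hvj : m * v ≤ j) (hyj : jstar ≤ m * y) :
    configRegret m jstar (Config.single v y hv hy) j =
      (m * y - jstar) / min ((m : ℝ) - jstar) jstar := by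
  rw [configRegret_single hv0, netBenefit_single, if_neg (not_lt.2 hvj),
    max_eq_left (div_nonneg (sub_nonneg.2 hyj) hc), sub_zero]

theorem configRegret_single_mem_twoPointRegrets (h : |y - v| ≤ α) :
    configRegret m jstar (Config.single v y hv hy) j ∈ twoPointRegrets m jstar α j :=
  ⟨Config.single v y hv hy, one_le_two,
    show ∑ _k : Fin 1, 1 * |y - v| ≤ α by simpa using h, rfl⟩

end Single

theorem sub_max_div_mem_twoPointRegrets {t : ℝ} (hc : 0 ≤ min ((m : ℝ) - jstar) jstar)
    (hα : 0 ≤ α) (hj : 0 ≤ j) (hjt : j < t) (htm : t ≤ m) (htj : max 0 (t - α * m) ≤ jstar) :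
    (jstar - max 0 (t - α * m)) / min ((m : ℝ) - jstar) jstar ∈ twoPointRegrets m jstar α j := by
  have hm : (0 : ℝ) < m := by linarith
  have hv : t / m ∈ Icc (0 : ℝ) 1 := ⟨div_nonneg (by linarith) hm.le, div_le_one_of_le₀ htm hm.le⟩
  have hy_le : max 0 (t / m - α) ≤ t / m := max_le hv.1 (sub_le_self _ hα)
  have hy : max 0 (t / m - α) ∈ Icc (0 : ℝ) 1 := ⟨le_max_left _ _, hy_le.trans hv.2⟩
  have hmv : (m : ℝ) * (t / m) = t := mul_div_cancel₀ t hm.ne'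
  have hmy : (m : ℝ) * max 0 (t / m - α) = max 0 (t - α * m) := by
    rw [mul_max_of_nonneg _ _ hm.le, mul_zero, mul_sub, hmv, mul_comm]
  have hece : |max 0 (t / m - α) - t / m| ≤ α := by
    rw [abs_sub_comm, abs_of_nonneg (sub_nonneg.2 hy_le)]
    linarith [le_max_right 0 (t / m - α)]
  rw [← hmy, ← configRegret_single_of_lt (hv := hv) (hy := hy) hc hj (hmv.symm ▸ hjt)
    (hmy.symm ▸ htj)]
  exact configRegret_single_mem_twoPointRegrets hece

theorem sub_max_div_mem_closure_twoPointRegrets (hc : 0 ≤ min ((m : ℝ) - jstar) jstar)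
    (hα : 0 ≤ α) (hj : 0 ≤ j) (hjm : j < m) (hjj : max 0 (j - α * m) < jstar) :
    (jstar - max 0 (j - α * m)) / min ((m : ℝ) - jstar) jstar ∈
      closure (twoPointRegrets m jstar α j) := by
  have hcont : Continuous fun t : ℝ => max 0 (t - α * m) := by fun_prop
  refine mem_closure_of_tendsto
    ((((continuous_const.sub hcont).div_const _).tendsto j).mono_left
      (nhdsWithin_le_nhds (s := Ioi j))) ?_
  filter_upwards [self_mem_nhdsWithin,
    (eventually_lt_nhds hjm).filter_mono nhdsWithin_le_nhds,
    (hcont.continuousAt.eventually_lt continuousAt_const hjj).filter_mono nhdsWithin_le_nhds]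
    with t hjt htm htj
  exact sub_max_div_mem_twoPointRegrets hc hα hj hjt htm.le htj.le

theorem min_sub_div_mem_twoPointRegrets (hc : 0 ≤ min ((m : ℝ) - jstar) jstar)
    (hα : 0 ≤ α) (hj : 0 < j) (hjm : j ≤ m) (hjj : jstar ≤ min (m : ℝ) (j + α * m)) :
    (min (m : ℝ) (j + α * m) - jstar) / min ((m : ℝ) - jstar) jstar ∈
      twoPointRegrets m jstar α j := by
  have hm : (0 : ℝ) < m := hj.trans_le hjm
  have hv : j / m ∈ Icc (0 : ℝ) 1 := ⟨div_nonneg hj.le hm.le, div_le_one_of_le₀ hjm hm.le⟩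
  have hy_ge : j / m ≤ min 1 (j / m + α) := le_min hv.2 (le_add_of_nonneg_right hα)
  have hy : min 1 (j / m + α) ∈ Icc (0 : ℝ) 1 := ⟨hv.1.trans hy_ge, min_le_left _ _⟩
  have hmv : (m : ℝ) * (j / m) = j := mul_div_cancel₀ j hm.ne'
  have hmy : (m : ℝ) * min 1 (j / m + α) = min (m : ℝ) (j + α * m) := by
    rw [mul_min_of_nonneg _ _ hm.le, mul_one, mul_add, hmv, mul_comm]
  have hece : |min 1 (j / m + α) - j / m| ≤ α := by
    rw [abs_of_nonneg (sub_nonneg.2 hy_ge)]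
    linarith [min_le_right 1 (j / m + α)]
  rw [← hmy, ← configRegret_single_of_le (hv := hv) (hy := hy) hc (hmv.symm ▸ hj)
    hmv.le (hmy.symm ▸ hjj)]
  exact configRegret_single_mem_twoPointRegrets hece

theorem ite_lt_sub_ite_lt_le_of_le {j' j t x B : ℝ} (hjj : j' ≤ j) (hB : 0 ≤ B)
    (hx : t ≤ j → x ≤ B) : ((if j' < t then x else 0) - if j < t then x else 0) ≤ B := by
  by_cases hj : j < t
  · rw [if_pos (hjj.trans_lt hj), if_pos hj, sub_self]
    exact hB
  · rw [if_neg hj, sub_zero]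
    split_ifs
    exacts [hx (not_lt.1 hj), hB]

theorem ite_lt_sub_ite_lt_le_of_ge {j' j t x B : ℝ} (hjj : j ≤ j') (hB : 0 ≤ B)
    (hx : j < t → -x ≤ B) : ((if j' < t then x else 0) - if j < t then x else 0) ≤ B := by
  by_cases hj : j' < t
  · rw [if_pos hj, if_pos (hjj.trans_lt hj), sub_self]
    exact hB
  · rw [if_neg hj, zero_sub]
    split_ifs with h
    exacts [hx h, neg_zero.le.trans hB]

theorem netBenefit_sub_le {C : Config} (hC : ECEle α C) (hc : 0 ≤ min ((m : ℝ) - jstar) jstar)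
    {j' a b : ℝ} (hb : 0 ≤ b)
    (h : ∀ k, ((if j' < m * C.v k then m * C.y k - jstar else 0) -
      if j < m * C.v k then m * C.y k - jstar else 0) ≤ a + b * |C.y k - C.v k|) :
    netBenefit m jstar C j' - netBenefit m jstar C j ≤
      (a + b * α) / min ((m : ℝ) - jstar) jstar := by
  have hsum : ∀ t, netBenefit m jstar C t = (∑ k, C.μ k *
      if t < m * C.v k then m * C.y k - jstar else 0) / min ((m : ℝ) - jstar) jstar := by
    intro t
    simp only [netBenefit, Finset.sum_div, mul_ite, mul_zero, ite_div, zero_div]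
  rw [hsum, hsum, ← sub_div, ← Finset.sum_sub_distrib]
  refine div_le_div_of_nonneg_right ?_ hc
  calc ∑ k, ((C.μ k * if j' < m * C.v k then m * C.y k - jstar else 0) -
        C.μ k * if j < m * C.v k then m * C.y k - jstar else 0)
      ≤ ∑ k, C.μ k * (a + b * |C.y k - C.v k|) := Finset.sum_le_sum fun k _ => by
        rw [← mul_sub]
        exact mul_le_mul_of_nonneg_left (h k) (C.μ_nonneg k)
    _ = a + b * ∑ k, C.μ k * |C.y k - C.v k| := by
        simp only [mul_add, Finset.sum_add_distrib, ← Finset.sum_mul, C.μ_sum, one_mul,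
          Finset.mul_sum, mul_left_comm]
    _ ≤ a + b * α := by gcongr; exact hC

theorem configRegret_le_div {C : Config} (hC : ECEle α C)
    (hc : 0 ≤ min ((m : ℝ) - jstar) jstar) {a₁ b₁ a₂ b₂ T : ℝ}
    (ha₁ : 0 ≤ a₁) (hb₁ : 0 ≤ b₁) (ha₂ : 0 ≤ a₂) (hb₂ : 0 ≤ b₂)
    (hadd : ∀ k, m * C.v k ≤ j → m * C.y k - jstar ≤ a₁ + b₁ * |C.y k - C.v k|)
    (hrem : ∀ k, j < m * C.v k → jstar - m * C.y k ≤ a₂ + b₂ * |C.y k - C.v k|)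
    (hT₁ : a₁ + b₁ * α ≤ T) (hT₂ : a₂ + b₂ * α ≤ T) :
    configRegret m jstar C j ≤ T / min ((m : ℝ) - jstar) jstar := by
  rw [configRegret, sub_le_iff_le_add]
  refine csSup_le ((nonempty_Icc.2 (Nat.cast_nonneg m)).image _) ?_
  rintro _ ⟨j', -, rfl⟩
  rw [← sub_le_iff_le_add]
  rcases le_total j' j with hj' | hj'
  · refine (netBenefit_sub_le hC hc hb₁ fun k => ite_lt_sub_ite_lt_le_of_le hj'
      (add_nonneg ha₁ (mul_nonneg hb₁ (abs_nonneg _))) (hadd k)).trans ?_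
    exact div_le_div_of_nonneg_right hT₁ hc
  · refine (netBenefit_sub_le hC hc hb₂ fun k => ite_lt_sub_ite_lt_le_of_ge hj'
      (add_nonneg ha₂ (mul_nonneg hb₂ (abs_nonneg _))) fun h => ?_).trans ?_
    · rw [neg_sub]
      exact hrem k h
    · exact div_le_div_of_nonneg_right hT₂ hc

theorem configRegret_le_of_le_jstar {C : Config} (hC : ECEle α C) (hjstar : 0 ≤ jstar)
    (hjstarm : jstar ≤ m) (hα : 0 ≤ α) (hαj : α * m ≤ jstar) (hj : j ∈ Icc 0 jstar) :
    configRegret m jstar C j ≤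
      (jstar - max 0 (j - α * m)) / min ((m : ℝ) - jstar) jstar := by
  have hc : 0 ≤ min ((m : ℝ) - jstar) jstar := le_min (sub_nonneg.2 hjstarm) hjstar
  have hm : (0 : ℝ) ≤ m := Nat.cast_nonneg m
  have hb : 0 ≤ (m : ℝ) - jstar + j := by linarith [hj.1]
  have hadd : ∀ k, m * C.v k ≤ j →
      m * C.y k - jstar ≤ 0 + (m - jstar + j) * |C.y k - C.v k| := fun k hk =>
    (mul_sub_le_mul_abs_of_le hm hk hj.2 (C.abs_sub_le_one k)).trans_eq (zero_add _).symm
  have hαb : ((m : ℝ) - jstar + j) * α ≤ α * m := by nlinarith [hj.2]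
  rw [← min_sub_sub_left, sub_zero, ← min_div_div_right hc]
  refine le_min (configRegret_le_div hC hc le_rfl hb hjstar le_rfl hadd (fun k _ => ?_)
    (by linarith) (by linarith)) (configRegret_le_div hC hc le_rfl hb (sub_nonneg.2 hj.2) hm hadd
    (fun k hk => sub_mul_le_of_lt_mul hm hk)
    (by linarith [mul_nonneg hα (sub_nonneg.2 hj.2), hj.2]) (by linarith))
  linarith [mul_nonneg hm (C.y_mem k).1]

theorem configRegret_le_of_jstar_le {C : Config} (hC : ECEle α C) (hjstar : 0 ≤ jstar)
    (hα : 0 ≤ α) (hαj : α * m ≤ m - jstar) (hj : j ∈ Icc jstar m) :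
    configRegret m jstar C j ≤
      (min (m : ℝ) (j + α * m) - jstar) / min ((m : ℝ) - jstar) jstar := by
  have hjstarm : jstar ≤ m := hj.1.trans hj.2
  have hc : 0 ≤ min ((m : ℝ) - jstar) jstar := le_min (sub_nonneg.2 hjstarm) hjstar
  have hm : (0 : ℝ) ≤ m := Nat.cast_nonneg m
  have hb : 0 ≤ (m : ℝ) + jstar - j := by linarith [hj.2]
  have hrem : ∀ k, j < m * C.v k →
      jstar - m * C.y k ≤ 0 + (m + jstar - j) * |C.y k - C.v k| := fun k hk =>
    (sub_mul_le_mul_abs_of_le hm hk hj.1 (C.abs_sub_le_one k)).trans_eq (zero_add _).symm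
  have hαb : ((m : ℝ) + jstar - j) * α ≤ α * m := by nlinarith [hj.1]
  rw [← min_sub_sub_right, ← min_div_div_right hc]
  refine le_min (configRegret_le_div hC hc (sub_nonneg.2 hjstarm) le_rfl le_rfl hb
    (fun k _ => ?_) hrem (by linarith) (by linarith)) (configRegret_le_div hC hc
    (sub_nonneg.2 hj.1) hm le_rfl hb (fun k hk => mul_sub_le_of_mul_le hm hk) hrem
    (by linarith) (by linarith [mul_nonneg hα (sub_nonneg.2 hj.1), hj.1]))
  linarith [mul_le_of_le_one_right hm (C.y_mem k).2]

theorem sSup_twoPointRegrets_of_le_jstar (hjstar : 0 < jstar) (hjstarm : jstar < m)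
    (hα : 0 < α) (hαj : α * m ≤ jstar) (hj : j ∈ Icc 0 jstar) :
    sSup (twoPointRegrets m jstar α j) =
      (jstar - max 0 (j - α * m)) / min ((m : ℝ) - jstar) jstar := by
  have hc : 0 ≤ min ((m : ℝ) - jstar) jstar := le_min (sub_nonneg.2 hjstarm.le) hjstar.le
  have hαm : 0 < α * m := mul_pos hα (hjstar.trans hjstarm)
  refine sSup_eq_of_forall_le_of_mem_closure ?_ (sub_max_div_mem_closure_twoPointRegrets hc
    hα.le hj.1 (hj.2.trans_lt hjstarm) (max_lt hjstar (by linarith [hj.2])))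
  rintro _ ⟨C, -, hC, rfl⟩
  exact configRegret_le_of_le_jstar hC hjstar.le hjstarm.le hα.le hαj hj

theorem sSup_twoPointRegrets_of_jstar_le (hjstar : 0 < jstar) (hα : 0 ≤ α)
    (hαj : α * m ≤ m - jstar) (hj : j ∈ Icc jstar m) :
    sSup (twoPointRegrets m jstar α j) =
      (min (m : ℝ) (j + α * m) - jstar) / min ((m : ℝ) - jstar) jstar := by
  have hjstarm : jstar ≤ m := hj.1.trans hj.2
  have hc : 0 ≤ min ((m : ℝ) - jstar) jstar := le_min (sub_nonneg.2 hjstarm) hjstar.le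
  refine sSup_eq_of_forall_le_of_mem_closure ?_ (subset_closure
    (min_sub_div_mem_twoPointRegrets hc hα (hjstar.trans_le hj.1) hj.2
      (le_min hjstarm (by nlinarith [hj.1, Nat.cast_nonneg (α := ℝ) m]))))
  rintro _ ⟨C, -, hC, rfl⟩
  exact configRegret_le_of_jstar_le hC hjstar.le hα hαj hj

end

theorem sup_regret_two_value_configs_closed_form_general
    (m : ℕ)
    (jstar : ℝ) (hjstar1 : 0 < jstar) (hjstar2 : jstar < m)
    (α : ℝ) (hα1 : 0 < α)
    (hαm : α * m ≤ min jstar ((m : ℝ) - jstar))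
    (j : ℝ) (hj : j ∈ Set.Icc (0 : ℝ) (m : ℝ)) :
    let E : ℝ :=
      sSup {r | ∃ C : Config, C.n ≤ 2 ∧ ECEle α C ∧ r = configRegret m jstar C j}
    (j < jstar → j ≤ α * m →
      E = (1 / min ((m : ℝ) - jstar) jstar) *
        max jstar (α * m * ((m : ℝ) - jstar) / ((m : ℝ) - j))) ∧
    (α * m < j → j ≤ jstar →
      E = (1 / min ((m : ℝ) - jstar) jstar) *
        max (jstar - j + α * m) (α * m * ((m : ℝ) - jstar) / ((m : ℝ) - j))) ∧
    (jstar < j → j ≤ (1 - α) * m →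
      E = (1 / min ((m : ℝ) - jstar) jstar) *
        max (j - jstar + α * m) (α * m * jstar / j)) ∧
    (jstar ≤ j → (1 - α) * m < j →
      E = (1 / min ((m : ℝ) - jstar) jstar) *
        max ((m : ℝ) - jstar) (α * m * jstar / j)) := by
  intro E
  obtain ⟨hαj, hαj'⟩ := le_min_iff.1 hαm
  have hαm0 : 0 < α * m := mul_pos hα1 (hjstar1.trans hjstar2)
  simp only [one_div_mul_eq_div]
  refine ⟨fun h₁ h₂ => ?_, fun h₁ h₂ => ?_, fun h₁ h₂ => ?_, fun h₁ h₂ => ?_⟩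
  · have hE := sSup_twoPointRegrets_of_le_jstar hjstar1 hjstar2 hα1 hαj ⟨hj.1, h₁.le⟩
    rw [max_eq_left (sub_nonpos.2 h₂), sub_zero] at hE
    rwa [max_eq_left ((div_le_iff₀ (by linarith)).2 (by nlinarith))]
  · have hE := sSup_twoPointRegrets_of_le_jstar hjstar1 hjstar2 hα1 hαj ⟨hj.1, h₂⟩
    rw [max_eq_right (sub_nonneg.2 h₁.le), ← sub_add] at hE
    rwa [max_eq_left ((div_le_iff₀ (by linarith)).2 (by nlinarith))]
  · have hE := sSup_twoPointRegrets_of_jstar_le hjstar1 hα1.le hαj' ⟨h₁.le, hj.2⟩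
    rw [min_eq_right (by linarith), add_sub_right_comm] at hE
    rwa [max_eq_left ((div_le_iff₀ (hjstar1.trans h₁)).2 (by nlinarith))]
  · have hE := sSup_twoPointRegrets_of_jstar_le hjstar1 hα1.le hαj' ⟨h₁, hj.2⟩
    rw [min_eq_left (by linarith)] at hE
    rwa [max_eq_left ((div_le_iff₀ (hjstar1.trans_le h₁)).2 (by nlinarith))]

/-- **Closed form for the worst-case ECE regret of two-value predictors.**
Let `m ≥ 2`, `0 < j* < m`, `α ∈ (0,1)` with `αm ≤ min{j*, m−j*}`.  For every threshold
`j ∈ [0,m]`, the supremum of `regret(j)` over all configurations with at most two mass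
points and ECE at most `α` equals `1/min{m−j*, j*}` times the piecewise expression:
`max{j*, αm·(m−j*)/(m−j)}` if `j < j*` and `j ≤ αm`;
`max{j*−j+αm, αm·(m−j*)/(m−j)}` if `αm < j ≤ j*`;
`max{j−j*+αm, αm·j*/j}` if `j* < j ≤ (1−α)m`;
`max{m−j*, αm·j*/j}` if `j ≥ j*` and `j > (1−α)m`. -/
theorem sup_regret_two_value_configs_closed_form
    (m : ℕ) (hm : 2 ≤ m)
    (jstar : ℝ) (hjstar1 : 0 < jstar) (hjstar2 : jstar < m)
    (α : ℝ) (hα1 : 0 < α) (hα2 : α < 1)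
    (hαm : α * m ≤ min jstar ((m : ℝ) - jstar))
    (j : ℝ) (hj : j ∈ Set.Icc (0 : ℝ) (m : ℝ)) :
    let E : ℝ :=
      sSup {r | ∃ C : Config, C.n ≤ 2 ∧ ECEle α C ∧ r = configRegret m jstar C j}
    (j < jstar → j ≤ α * m →
      E = (1 / min ((m : ℝ) - jstar) jstar) *
        max jstar (α * m * ((m : ℝ) - jstar) / ((m : ℝ) - j))) ∧
    (α * m < j → j ≤ jstar →
      E = (1 / min ((m : ℝ) - jstar) jstar) *
        max (jstar - j + α * m) (α * m * ((m : ℝ) - jstar) / ((m : ℝ) - j))) ∧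
    (jstar < j → j ≤ (1 - α) * m →
      E = (1 / min ((m : ℝ) - jstar) jstar) *
        max (j - jstar + α * m) (α * m * jstar / j)) ∧
    (jstar ≤ j → (1 - α) * m < j →
      E = (1 / min ((m : ℝ) - jstar) jstar) *
        max ((m : ℝ) - jstar) (α * m * jstar / j)) :=
  sup_regret_two_value_configs_closed_form_general m jstar hjstar1 hjstar2 α hα1 hαm j hj
end

section
/- (Middle regime under ECE.) Let m ≥ 2 be an integer, j* real with 0 < j* < m, and α ∈ (0,1), and suppose αm < j* < (1−α)m. Define g : [0,m] → ℝ piecewise by: g(j) = max{ j*, αm·(m−j*)/(m−j) } if j < j* and j ≤ αm; g(j) = max{ j*−j+αm, αm·(m−j*)/(m−j) } if αm < j ≤ j*; g(j) = max{ j−j*+αm, αm·j*/j } if j* < j ≤ (1−α)m; and g(j) = max{ m−j*, αm·j*/j } if j ≥ j* and j > (1−α)m. Then g(j*) = αm, and g(j) ≥ αm for every j ∈ [0,m]; in particular the therapeutic threshold j* itself minimizes g in this regime. -/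
theorem therapeutic_threshold_minimizes_g_middle_regime_general
    (m : ℕ)
    (jstar : ℝ) (hjstar2 : jstar < m)
    (α : ℝ)
    (hmid1 : α * m < jstar) (hmid2 : jstar < (1 - α) * m) :
    let g : ℝ → ℝ := fun j =>
      if j < jstar ∧ j ≤ α * m then
        max jstar (α * m * ((m : ℝ) - jstar) / ((m : ℝ) - j))
      else if α * m < j ∧ j ≤ jstar then
        max (jstar - j + α * m) (α * m * ((m : ℝ) - jstar) / ((m : ℝ) - j))
      else if jstar < j ∧ j ≤ (1 - α) * m then
        max (j - jstar + α * m) (α * m * jstar / j)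
      else
        max ((m : ℝ) - jstar) (α * m * jstar / j)
    g jstar = α * m ∧ ∀ j ∈ Set.Icc (0 : ℝ) (m : ℝ), α * m ≤ g j := by
  intro g
  refine ⟨?_, fun j _ => ?_⟩
  · have not_below : ¬(jstar < jstar ∧ jstar ≤ α * m) := fun h => h.1.false
    simp only [g, if_neg not_below, if_pos (And.intro hmid1 le_rfl), sub_self, zero_add,
      mul_div_cancel_right₀ _ (sub_ne_zero.2 hjstar2.ne'), max_self]
  · -- The first argument of each max is `j*`, `αm + |j - j*|` or `m - j*`, all `≥ αm` here.
    simp only [g]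
    split_ifs with _ left_of right_of
    · exact le_max_of_le_left hmid1.le
    · exact le_max_of_le_left (by linarith [left_of.2])
    · exact le_max_of_le_left (by linarith [right_of.1])
    · exact le_max_of_le_left (by linarith)

/-- **Middle regime under ECE.** Let `m ≥ 2`, `0 < j* < m`, `α ∈ (0,1)` with
`αm < j* < (1−α)m`, and define `g` on `[0,m]` piecewise by:
`g(j) = max{j*, αm·(m−j*)/(m−j)}` if `j < j*` and `j ≤ αm`;
`g(j) = max{j*−j+αm, αm·(m−j*)/(m−j)}` if `αm < j ≤ j*`;
`g(j) = max{j−j*+αm, αm·j*/j}` if `j* < j ≤ (1−α)m`;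
`g(j) = max{m−j*, αm·j*/j}` if `j ≥ j*` and `j > (1−α)m`.
Then `g(j*) = αm` and `g(j) ≥ αm` for every `j ∈ [0,m]`; in particular the therapeutic
threshold `j*` itself minimizes `g` in this regime. -/
theorem therapeutic_threshold_minimizes_g_middle_regime
    (m : ℕ) (hm : 2 ≤ m)
    (jstar : ℝ) (hjstar1 : 0 < jstar) (hjstar2 : jstar < m)
    (α : ℝ) (hα1 : 0 < α) (hα2 : α < 1)
    (hmid1 : α * m < jstar) (hmid2 : jstar < (1 - α) * m) :
    let g : ℝ → ℝ := fun j =>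
      if j < jstar ∧ j ≤ α * m then
        max jstar (α * m * ((m : ℝ) - jstar) / ((m : ℝ) - j))
      else if α * m < j ∧ j ≤ jstar then
        max (jstar - j + α * m) (α * m * ((m : ℝ) - jstar) / ((m : ℝ) - j))
      else if jstar < j ∧ j ≤ (1 - α) * m then
        max (j - jstar + α * m) (α * m * jstar / j)
      else
        max ((m : ℝ) - jstar) (α * m * jstar / j)
    g jstar = α * m ∧ ∀ j ∈ Set.Icc (0 : ℝ) (m : ℝ), α * m ≤ g j :=
  therapeutic_threshold_minimizes_g_middle_regime_general m jstar hjstar2 α hmid1 hmid2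
end
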